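/- For the 2D stochastic Navier–Stokes truncation with noise intensities σ_l² = γ_l² = |l|^{4−2p} and viscosity ν = ν_p, the measure ρ ∝ exp(−ν_p ∑_l |l|^{2p−2}(α_l² + β_l²)) is a stationary solution of the Fokker–Planck equation, i.e., K*ρ = 0, where K* = ∑_l [ν|l|² ∂_{α_l}(α_l ·) + ν|l|² ∂_{β_l}(β_l ·) + ∂_{α_l}(F_l ·) + ∂_{β_l}(G_l ·) + (σ_l²/2)∂²_{α_l} + (γ_l²/2)∂²_{β_l}]. -/

import Mathlib

noncomputable def ev1 {ι : Type*} [Fintype ι] [DecidableEq ι] (l : ι) :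
    ((ι → ℝ) × (ι → ℝ)) →L[ℝ] ℝ :=
  (ContinuousLinearMap.proj l).comp (ContinuousLinearMap.fst ℝ (ι → ℝ) (ι → ℝ))

noncomputable def ev2 {ι : Type*} [Fintype ι] [DecidableEq ι] (l : ι) :
    ((ι → ℝ) × (ι → ℝ)) →L[ℝ] ℝ :=
  (ContinuousLinearMap.proj l).comp (ContinuousLinearMap.snd ℝ (ι → ℝ) (ι → ℝ))

@[simp] lemma ev1_apply {ι : Type*} [Fintype ι] [DecidableEq ι] (l : ι)
    (v : (ι → ℝ) × (ι → ℝ)) : ev1 l v = v.1 l := rfl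

@[simp] lemma ev2_apply {ι : Type*} [Fintype ι] [DecidableEq ι] (l : ι)
    (v : (ι → ℝ) × (ι → ℝ)) : ev2 l v = v.2 l := rfl

noncomputable def Dmap {ι : Type*} [Fintype ι] [DecidableEq ι] (c : ι → ℝ)
    (x : (ι → ℝ) × (ι → ℝ)) : ((ι → ℝ) × (ι → ℝ)) →L[ℝ] ℝ :=
  ∑ l, ((2 * c l * x.1 l) • ev1 l + (2 * c l * x.2 l) • ev2 l)

lemma Dmap_apply1 {ι : Type*} [Fintype ι] [DecidableEq ι] (c : ι → ℝ)
    (x : (ι → ℝ) × (ι → ℝ)) (l : ι) :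
    Dmap c x ((Pi.single l 1, 0) : (ι → ℝ) × (ι → ℝ)) = 2 * c l * x.1 l := by
  simp [Dmap, ContinuousLinearMap.sum_apply, Pi.single_apply]

lemma Dmap_apply2 {ι : Type*} [Fintype ι] [DecidableEq ι] (c : ι → ℝ)
    (x : (ι → ℝ) × (ι → ℝ)) (l : ι) :
    Dmap c x ((0, Pi.single l 1) : (ι → ℝ) × (ι → ℝ)) = 2 * c l * x.2 l := by
  simp [Dmap, ContinuousLinearMap.sum_apply, Pi.single_apply]

lemma hasFDerivAt_Om {ι : Type*} [Fintype ι] [DecidableEq ι] (c : ι → ℝ)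
    (x : (ι → ℝ) × (ι → ℝ)) :
    HasFDerivAt (fun y : (ι → ℝ) × (ι → ℝ) => ∑ l, c l * ((y.1 l) ^ 2 + (y.2 l) ^ 2))
      (Dmap c x) x := by
  apply HasFDerivAt.fun_sum
  intro l _
  have h1 : HasFDerivAt (fun y : (ι → ℝ) × (ι → ℝ) => y.1 l) (ev1 l) x :=
    (ev1 l).hasFDerivAt
  have h2 : HasFDerivAt (fun y : (ι → ℝ) × (ι → ℝ) => y.2 l) (ev2 l) x :=
    (ev2 l).hasFDerivAt
  have := (((h1.mul h1).add (h2.mul h2)).const_mul (c l))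
  have key : (2 * c l * x.1 l) • ev1 l + (2 * c l * x.2 l) • ev2 l
      = c l • (x.1 l • ev1 l + x.1 l • ev1 l + (x.2 l • ev2 l + x.2 l • ev2 l)) := by
    ext v <;>
      simp [ContinuousLinearMap.comp_apply, ContinuousLinearMap.add_apply,
        ContinuousLinearMap.smul_apply] <;> ring
  simpa only [pow_two, key, Pi.add_apply, Pi.mul_apply] using this

lemma hasFDerivAt_rho {ι : Type*} [Fintype ι] [DecidableEq ι] (c : ι → ℝ) (νp : ℝ)
    (x : (ι → ℝ) × (ι → ℝ)) :
    HasFDerivAt (fun y : (ι → ℝ) × (ι → ℝ) =>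
        Real.exp (-νp * ∑ l, c l * ((y.1 l) ^ 2 + (y.2 l) ^ 2)))
      ((Real.exp (-νp * ∑ l, c l * ((x.1 l) ^ 2 + (x.2 l) ^ 2)) * (-νp)) • Dmap c x) x := by
  have := ((hasFDerivAt_Om c x).const_mul (-νp)).exp
  rw [← smul_smul]
  exact this

/-- For the truncated 2D stochastic Navier–Stokes equation with
`σ_l² = γ_l² = |l|^{4−2p}` and `ν = ν_p`, the density `ρ = exp(−ν_p Ω_{2p})`
is annihilated by the Fokker–Planck operator `K*`. -/
theorem sns_gaussian_stationary
    (L : Finset (ℤ × ℤ)) (hL : ((0, 0) : ℤ × ℤ) ∉ L)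
    (p νp : ℝ) (hνp : 0 < νp)
    (nrm : {l // l ∈ L} → ℝ)
    (hnrm : ∀ l : {l // l ∈ L}, nrm l = ((l.1.1 : ℝ)) ^ 2 + ((l.1.2 : ℝ)) ^ 2)
    (F G : {l // l ∈ L} → (({l // l ∈ L} → ℝ) × ({l // l ∈ L} → ℝ)) → ℝ)
    (hF : ∀ l, ContDiff ℝ (⊤ : ℕ∞) (F l)) (hG : ∀ l, ContDiff ℝ (⊤ : ℕ∞) (G l))
    (hdiv : ∀ x, ∑ l : {l // l ∈ L},
      (fderiv ℝ (F l) x (Pi.single l 1, 0) + fderiv ℝ (G l) x (0, Pi.single l 1)) = 0)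
    (hcons : ∀ x : ({l // l ∈ L} → ℝ) × ({l // l ∈ L} → ℝ),
      ∑ l : {l // l ∈ L}, nrm l ^ (p - 1) * (x.1 l * F l x + x.2 l * G l x) = 0)
    (ρ : (({l // l ∈ L} → ℝ) × ({l // l ∈ L} → ℝ)) → ℝ)
    (hρ : ∀ x, ρ x =
      Real.exp (-νp * ∑ l : {l // l ∈ L}, nrm l ^ (p - 1) * ((x.1 l) ^ 2 + (x.2 l) ^ 2))) :
    ∀ x, ∑ l : {l // l ∈ L},
      (νp * nrm l * fderiv ℝ (fun y => y.1 l * ρ y) x (Pi.single l 1, 0)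
        + νp * nrm l * fderiv ℝ (fun y => y.2 l * ρ y) x (0, Pi.single l 1)
        + fderiv ℝ (fun y => F l y * ρ y) x (Pi.single l 1, 0)
        + fderiv ℝ (fun y => G l y * ρ y) x (0, Pi.single l 1)
        + nrm l ^ (2 - p) / 2 *
            fderiv ℝ (fun y => fderiv ℝ ρ y (Pi.single l 1, 0)) x (Pi.single l 1, 0)
        + nrm l ^ (2 - p) / 2 *
            fderiv ℝ (fun y => fderiv ℝ ρ y (0, Pi.single l 1)) x (0, Pi.single l 1)) = 0 := by
  intro x
  classical
  let ι := {l // l ∈ L}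
  set c : ι → ℝ := fun l => nrm l ^ (p - 1) with hc
  -- positivity of nrm
  have hpos : ∀ l : ι, 0 < nrm l := by
    intro l
    rw [hnrm l]
    rcases l with ⟨⟨a, b⟩, hl⟩
    have hab : ¬(a = 0 ∧ b = 0) := by
      rintro ⟨rfl, rfl⟩; exact hL hl
    rcases not_and_or.1 hab with h | h
    · have : ((a : ℝ)) ≠ 0 := Int.cast_ne_zero.2 h
      positivity
    · have : ((b : ℝ)) ≠ 0 := Int.cast_ne_zero.2 h
      positivity
  have hρfun : ρ = fun y : (ι → ℝ) × (ι → ℝ) =>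
      Real.exp (-νp * ∑ l, c l * ((y.1 l) ^ 2 + (y.2 l) ^ 2)) := funext hρ
  -- derivative of ρ
  have hDρ : ∀ y, HasFDerivAt ρ ((ρ y * (-νp)) • Dmap c y) y := by
    intro y
    rw [hρfun]
    exact hasFDerivAt_rho c νp y
  -- derivative of coordinate multiplications
  have hmul1 : ∀ (l : ι) (y), HasFDerivAt (fun y : (ι → ℝ) × (ι → ℝ) => y.1 l * ρ y)
      (y.1 l • ((ρ y * (-νp)) • Dmap c y) + ρ y • ev1 l) y := by
    intro l y
    exact (ev1 l).hasFDerivAt.mul (hDρ y)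
  have hmul2 : ∀ (l : ι) (y), HasFDerivAt (fun y : (ι → ℝ) × (ι → ℝ) => y.2 l * ρ y)
      (y.2 l • ((ρ y * (-νp)) • Dmap c y) + ρ y • ev2 l) y := by
    intro l y
    exact (ev2 l).hasFDerivAt.mul (hDρ y)
  have hev11 : ∀ l : ι, ev1 l ((Pi.single l 1, 0) : (ι → ℝ) × (ι → ℝ)) = 1 := by
    intro l; simp
  have hev22 : ∀ l : ι, ev2 l ((0, Pi.single l 1) : (ι → ℝ) × (ι → ℝ)) = 1 := by
    intro l; simp
  -- the six fderiv values
  have hT1 : ∀ l : ι, fderiv ℝ (fun y : (ι → ℝ) × (ι → ℝ) => y.1 l * ρ y) x (Pi.single l 1, 0)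
      = x.1 l * ((ρ x * (-νp)) * (2 * c l * x.1 l)) + ρ x := by
    intro l
    rw [(hmul1 l x).fderiv]
    simp [Dmap_apply1, hev11 l, mul_assoc]
  have hT2 : ∀ l : ι, fderiv ℝ (fun y : (ι → ℝ) × (ι → ℝ) => y.2 l * ρ y) x (0, Pi.single l 1)
      = x.2 l * ((ρ x * (-νp)) * (2 * c l * x.2 l)) + ρ x := by
    intro l
    rw [(hmul2 l x).fderiv]
    simp [Dmap_apply2, hev22 l, mul_assoc]
  have hFd : ∀ l : ι, HasFDerivAt (F l) (fderiv ℝ (F l) x) x :=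
    fun l => ((hF l).differentiable (by simp) x).hasFDerivAt
  have hGd : ∀ l : ι, HasFDerivAt (G l) (fderiv ℝ (G l) x) x :=
    fun l => ((hG l).differentiable (by simp) x).hasFDerivAt
  have hT3 : ∀ l : ι, fderiv ℝ (fun y => F l y * ρ y) x (Pi.single l 1, 0)
      = F l x * ((ρ x * (-νp)) * (2 * c l * x.1 l)) + ρ x * fderiv ℝ (F l) x (Pi.single l 1, 0) := by
    intro l
    rw [((hFd l).fun_mul (hDρ x)).fderiv]
    simp [Dmap_apply1, mul_assoc]
  have hT4 : ∀ l : ι, fderiv ℝ (fun y => G l y * ρ y) x (0, Pi.single l 1)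
      = G l x * ((ρ x * (-νp)) * (2 * c l * x.2 l)) + ρ x * fderiv ℝ (G l) x (0, Pi.single l 1) := by
    intro l
    rw [((hGd l).fun_mul (hDρ x)).fderiv]
    simp [Dmap_apply2, mul_assoc]
  -- second derivative terms
  have hfe1 : ∀ l : ι, (fun y : (ι → ℝ) × (ι → ℝ) => fderiv ℝ ρ y (Pi.single l 1, 0))
      = fun y => ((-2) * νp * c l) * (y.1 l * ρ y) := by
    intro l
    funext y
    rw [(hDρ y).fderiv]
    simp [Dmap_apply1]
    ring
  have hfe2 : ∀ l : ι, (fun y : (ι → ℝ) × (ι → ℝ) => fderiv ℝ ρ y (0, Pi.single l 1))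
      = fun y => ((-2) * νp * c l) * (y.2 l * ρ y) := by
    intro l
    funext y
    rw [(hDρ y).fderiv]
    simp [Dmap_apply2]
    ring
  have hT5 : ∀ l : ι, fderiv ℝ (fun y : (ι → ℝ) × (ι → ℝ) => fderiv ℝ ρ y (Pi.single l 1, 0)) x
        (Pi.single l 1, 0)
      = ((-2) * νp * c l) * (x.1 l * ((ρ x * (-νp)) * (2 * c l * x.1 l)) + ρ x) := by
    intro l
    rw [hfe1 l, (((hmul1 l x)).const_mul ((-2) * νp * c l)).fderiv]
    simp [Dmap_apply1, hev11 l, mul_assoc, mul_add]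
  have hT6 : ∀ l : ι, fderiv ℝ (fun y : (ι → ℝ) × (ι → ℝ) => fderiv ℝ ρ y (0, Pi.single l 1)) x
        (0, Pi.single l 1)
      = ((-2) * νp * c l) * (x.2 l * ((ρ x * (-νp)) * (2 * c l * x.2 l)) + ρ x) := by
    intro l
    rw [hfe2 l, (((hmul2 l x)).const_mul ((-2) * νp * c l)).fderiv]
    simp [Dmap_apply2, hev22 l, mul_assoc, mul_add]
  -- rpow identity
  have hkey : ∀ l : ι, nrm l ^ (2 - p) = nrm l / c l := by
    intro l
    rw [hc]
    rw [eq_div_iff (ne_of_gt (Real.rpow_pos_of_pos (hpos l) _)), ← Real.rpow_add (hpos l)]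
    norm_num
  have hcpos : ∀ l : ι, 0 < c l := fun l => Real.rpow_pos_of_pos (hpos l) _
  -- termwise simplification
  have hterm : ∀ l : ι,
      (νp * nrm l * fderiv ℝ (fun y => y.1 l * ρ y) x (Pi.single l 1, 0)
        + νp * nrm l * fderiv ℝ (fun y => y.2 l * ρ y) x (0, Pi.single l 1)
        + fderiv ℝ (fun y => F l y * ρ y) x (Pi.single l 1, 0)
        + fderiv ℝ (fun y => G l y * ρ y) x (0, Pi.single l 1)
        + nrm l ^ (2 - p) / 2 *
            fderiv ℝ (fun y => fderiv ℝ ρ y (Pi.single l 1, 0)) x (Pi.single l 1, 0)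
        + nrm l ^ (2 - p) / 2 *
            fderiv ℝ (fun y => fderiv ℝ ρ y (0, Pi.single l 1)) x (0, Pi.single l 1))
      = ρ x * (fderiv ℝ (F l) x (Pi.single l 1, 0) + fderiv ℝ (G l) x (0, Pi.single l 1))
        + ((-2) * νp * ρ x) * (c l * (x.1 l * F l x + x.2 l * G l x)) := by
    intro l
    have hcne : c l ≠ 0 := ne_of_gt (Real.rpow_pos_of_pos (hpos l) _)
    rw [hT1 l, hT2 l, hT3 l, hT4 l, hT5 l, hT6 l, hkey l]
    field_simp
    ring
  calc ∑ l : ι, _ = ∑ l : ι,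
      (ρ x * (fderiv ℝ (F l) x (Pi.single l 1, 0) + fderiv ℝ (G l) x (0, Pi.single l 1))
        + ((-2) * νp * ρ x) * (c l * (x.1 l * F l x + x.2 l * G l x))) :=
        Finset.sum_congr rfl (fun l _ => hterm l)
    _ = ρ x * (∑ l : ι, (fderiv ℝ (F l) x (Pi.single l 1, 0)
            + fderiv ℝ (G l) x (0, Pi.single l 1)))
        + ((-2) * νp * ρ x) * (∑ l : ι, c l * (x.1 l * F l x + x.2 l * G l x)) := by
        rw [Finset.sum_add_distrib, Finset.mul_sum, Finset.mul_sum]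
    _ = 0 := by
        rw [hdiv x, hcons x]
        ring
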